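/- Let n ≥ 1 be a natural number, C₀ > 0, ε > 0, and let u : ℝ → ℝ be a smooth function with 0 ≤ u ≤ 1, u(r) = 1 for |r| ≤ n, and u(r) = 0 for |r| ≥ 3n; set C_n := sup_r |u'(r)| (which is finite). Define G : ℝ³ → ℝ by G(x) = (1 − u(|x|)) · e^{C₀|x|}/(1 + ε·e^{C₀|x|}). Then G is differentiable at every x ∈ ℝ³ with x ≠ 0, and the bound ‖∇G(x)‖² ≤ 2·e^{6C₀n}·C_n² + 2·C₀²·G(x)² holds for every x ≠ 0. (This is inequality (exp-decay-2)/(exp-decay-3) in the proof of the exponential decay, Proposition 6.7.) -/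

import Mathlib

open MeasureTheory


private lemma stmt11_scalar (n : ℕ) (C₀ ε Cn u' ur r : ℝ)
    (hC₀ : 0 < C₀) (hε : 0 < ε) (hr_nonneg : 0 ≤ r) (hCn_nonneg : 0 ≤ Cn)
    (hu'le : |u'| ≤ Cn) (hu'zero : (3 * n : ℝ) < r → u' = 0)
    (h1u0 : 0 ≤ 1 - ur) :
    (-u' * (Real.exp (C₀ * r) / (1 + ε * Real.exp (C₀ * r))) +
        (1 - ur) * (C₀ * Real.exp (C₀ * r) / (1 + ε * Real.exp (C₀ * r)) ^ 2)) ^ 2 ≤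
      2 * Real.exp (6 * C₀ * n) * Cn ^ 2 +
        2 * C₀ ^ 2 * ((1 - ur) * (Real.exp (C₀ * r) / (1 + ε * Real.exp (C₀ * r)))) ^ 2 := by
  set e := Real.exp (C₀ * r) with he
  set d := 1 + ε * e with hd
  have hepos : 0 < e := Real.exp_pos _
  have hd0 : 0 < d := by positivity
  have hd1 : 1 ≤ d := by nlinarith
  -- term 1
  have ht1 : (u' * (e / d)) ^ 2 ≤ Real.exp (6 * C₀ * n) * Cn ^ 2 := by
    rcases le_or_gt r (3 * n) with hle | hgt
    · have hed : e / d ≤ Real.exp (3 * C₀ * n) := by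
        calc e / d ≤ e := by rw [div_le_iff₀ hd0]; nlinarith
          _ ≤ Real.exp (3 * C₀ * n) := by
              rw [he]; apply Real.exp_le_exp.2; nlinarith
      have hed0 : 0 ≤ e / d := by positivity
      have habs : |u' * (e / d)| ≤ Cn * Real.exp (3 * C₀ * n) := by
        rw [abs_mul]
        exact mul_le_mul hu'le (by rwa [abs_of_nonneg hed0]) (abs_nonneg _) hCn_nonneg
      have hsq := pow_le_pow_left₀ (abs_nonneg _) habs 2
      rw [sq_abs] at hsq
      refine hsq.trans (le_of_eq ?_)
      have hexp2 : Real.exp (3 * C₀ * n) ^ 2 = Real.exp (6 * C₀ * n) := by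
        rw [sq, ← Real.exp_add]; congr 1; ring
      rw [mul_pow, hexp2]; ring
    · rw [hu'zero hgt]
      have : (0 : ℝ) ≤ Real.exp (6 * C₀ * n) * Cn ^ 2 := by positivity
      simpa using this
  -- term 2
  have ht2 : ((1 - ur) * (C₀ * e / d ^ 2)) ^ 2 ≤ C₀ ^ 2 * ((1 - ur) * (e / d)) ^ 2 := by
    have ha : 0 ≤ (1 - ur) * (C₀ * e / d ^ 2) := by positivity
    have hdd : d ≤ d ^ 2 := by nlinarith
    have hb : (1 - ur) * (C₀ * e / d ^ 2) ≤ C₀ * ((1 - ur) * (e / d)) := by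
      calc (1 - ur) * (C₀ * e / d ^ 2) ≤ (1 - ur) * (C₀ * e / d) := by gcongr
        _ = C₀ * ((1 - ur) * (e / d)) := by ring
    calc ((1 - ur) * (C₀ * e / d ^ 2)) ^ 2 ≤ (C₀ * ((1 - ur) * (e / d))) ^ 2 :=
          pow_le_pow_left₀ ha hb 2
      _ = C₀ ^ 2 * ((1 - ur) * (e / d)) ^ 2 := by ring
  have hcsq : (-u' * (e / d) + (1 - ur) * (C₀ * e / d ^ 2)) ^ 2 ≤
      2 * (u' * (e / d)) ^ 2 + 2 * ((1 - ur) * (C₀ * e / d ^ 2)) ^ 2 := by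
    nlinarith [sq_nonneg (-u' * (e / d) - (1 - ur) * (C₀ * e / d ^ 2))]
  calc (-u' * (e / d) + (1 - ur) * (C₀ * e / d ^ 2)) ^ 2
      ≤ 2 * (u' * (e / d)) ^ 2 + 2 * ((1 - ur) * (C₀ * e / d ^ 2)) ^ 2 := hcsq
    _ ≤ 2 * (Real.exp (6 * C₀ * n) * Cn ^ 2) + 2 * (C₀ ^ 2 * ((1 - ur) * (e / d)) ^ 2) := by
        linarith
    _ = 2 * Real.exp (6 * C₀ * n) * Cn ^ 2 + 2 * C₀ ^ 2 * ((1 - ur) * (e / d)) ^ 2 := by ring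

/-- Inequalities (exp-decay-2)/(exp-decay-3) in the proof of Proposition 6.7: with
`u` a smooth cutoff (`0 ≤ u ≤ 1`, `u = 1` on `[-n, n]`, `u = 0` off `(-3n, 3n)`),
`C_n = sup |u'|`, and `G(x) = (1 − u(|x|))·e^{C₀|x|}/(1 + ε·e^{C₀|x|})`, the function `G`
is differentiable away from `0` and `‖∇G(x)‖² ≤ 2e^{6C₀n}C_n² + 2C₀²G(x)²` for `x ≠ 0`. -/
theorem stmt11 (n : ℕ) (hn : 1 ≤ n) (C₀ ε : ℝ) (hC₀ : 0 < C₀) (hε : 0 < ε)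
    (u : ℝ → ℝ) (hu_smooth : ContDiff ℝ (⊤ : ℕ∞) u)
    (hu_nonneg : ∀ r : ℝ, 0 ≤ u r) (hu_le_one : ∀ r : ℝ, u r ≤ 1)
    (hu_one : ∀ r : ℝ, |r| ≤ (n : ℝ) → u r = 1)
    (hu_zero : ∀ r : ℝ, (3 * n : ℝ) ≤ |r| → u r = 0) :
    ∀ x : EuclideanSpace ℝ (Fin 3), x ≠ 0 →
      DifferentiableAt ℝ
        (fun y : EuclideanSpace ℝ (Fin 3) =>
          (1 - u ‖y‖) * (Real.exp (C₀ * ‖y‖) / (1 + ε * Real.exp (C₀ * ‖y‖)))) x ∧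
      ‖fderiv ℝ
          (fun y : EuclideanSpace ℝ (Fin 3) =>
            (1 - u ‖y‖) * (Real.exp (C₀ * ‖y‖) / (1 + ε * Real.exp (C₀ * ‖y‖)))) x‖ ^ 2 ≤
        2 * Real.exp (6 * C₀ * n) * (⨆ r : ℝ, |deriv u r|) ^ 2 +
          2 * C₀ ^ 2 *
            ((1 - u ‖x‖) * (Real.exp (C₀ * ‖x‖) / (1 + ε * Real.exp (C₀ * ‖x‖)))) ^ 2 := by
  have hu_diff : Differentiable ℝ u := hu_smooth.differentiable (by simp)
  have hderiv_cont : Continuous (deriv u) := hu_smooth.continuous_deriv (by simp)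
  have hderiv_zero : ∀ r : ℝ, (3 * n : ℝ) < |r| → deriv u r = 0 := by
    intro r hr
    have hmem : {s : ℝ | (3 * n : ℝ) < |s|} ∈ nhds r :=
      (isOpen_lt continuous_const continuous_abs).mem_nhds hr
    have hev : u =ᶠ[nhds r] fun _ => (0 : ℝ) := by
      filter_upwards [hmem] with s hs using hu_zero s hs.le
    rw [hev.deriv_eq]; simp
  have hCS : HasCompactSupport (deriv u) := by
    apply HasCompactSupport.intro (isCompact_Icc (a := -(3 * n : ℝ)) (b := (3 * n : ℝ)))
    intro r hr
    apply hderiv_zero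
    rw [Set.mem_Icc, not_and_or, not_le, not_le] at hr
    rcases hr with hr | hr
    · calc (3 * n : ℝ) < -r := by linarith
        _ ≤ |r| := neg_le_abs r
    · exact hr.trans_le (le_abs_self r)
  have hbdd : BddAbove (Set.range fun r => |deriv u r|) := by
    obtain ⟨C, hC⟩ := hCS.exists_bound_of_continuous hderiv_cont
    refine ⟨C, ?_⟩
    rintro _ ⟨r, rfl⟩
    simpa [Real.norm_eq_abs] using hC r
  set Cn := ⨆ r : ℝ, |deriv u r| with hCn
  have hCn_le : ∀ r, |deriv u r| ≤ Cn := fun r => le_ciSup hbdd r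
  have hCn_nonneg : 0 ≤ Cn := (abs_nonneg _).trans (hCn_le 0)
  have hd_pos : ∀ r : ℝ, 0 < 1 + ε * Real.exp (C₀ * r) := fun r => by positivity
  have hd_one : ∀ r : ℝ, 1 ≤ 1 + ε * Real.exp (C₀ * r) := fun r => by
    nlinarith [Real.exp_pos (C₀ * r)]
  have hh : ∀ r : ℝ, HasDerivAt (fun s => Real.exp (C₀ * s) / (1 + ε * Real.exp (C₀ * s)))
      (C₀ * Real.exp (C₀ * r) / (1 + ε * Real.exp (C₀ * r)) ^ 2) r := by
    intro r
    have hlin : HasDerivAt (fun s : ℝ => C₀ * s) C₀ r := by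
      simpa using (hasDerivAt_id r).const_mul C₀
    have he : HasDerivAt (fun s => Real.exp (C₀ * s)) (Real.exp (C₀ * r) * C₀) r := hlin.exp
    have hd : HasDerivAt (fun s => 1 + ε * Real.exp (C₀ * s)) (ε * (Real.exp (C₀ * r) * C₀)) r :=
      (he.const_mul ε).const_add 1
    have := he.div hd (ne_of_gt (hd_pos r))
    convert this using 1
    all_goals try rfl
    congr 1
    ring
  have hf : ∀ r : ℝ, HasDerivAt
      (fun s => (1 - u s) * (Real.exp (C₀ * s) / (1 + ε * Real.exp (C₀ * s))))
      (-(deriv u r) * (Real.exp (C₀ * r) / (1 + ε * Real.exp (C₀ * r))) +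
        (1 - u r) * (C₀ * Real.exp (C₀ * r) / (1 + ε * Real.exp (C₀ * r)) ^ 2)) r := by
    intro r
    have hu' : HasDerivAt (fun s => 1 - u s) (-(deriv u r)) r :=
      ((hu_diff r).hasDerivAt).const_sub 1
    exact hu'.mul (hh r)
  intro x hx
  have hnorm : DifferentiableAt ℝ (fun y : EuclideanSpace ℝ (Fin 3) => ‖y‖) x :=
    differentiableAt_id.norm ℝ hx
  have hNlip : ‖fderiv ℝ (fun y : EuclideanSpace ℝ (Fin 3) => ‖y‖) x‖ ≤ 1 := by
    simpa using norm_fderiv_le_of_lipschitz ℝ lipschitzWith_one_norm (x₀ := x)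
  set c : ℝ := -(deriv u ‖x‖) * (Real.exp (C₀ * ‖x‖) / (1 + ε * Real.exp (C₀ * ‖x‖))) +
        (1 - u ‖x‖) * (C₀ * Real.exp (C₀ * ‖x‖) / (1 + ε * Real.exp (C₀ * ‖x‖)) ^ 2) with hc
  have hG : HasFDerivAt
      (fun y : EuclideanSpace ℝ (Fin 3) =>
        (1 - u ‖y‖) * (Real.exp (C₀ * ‖y‖) / (1 + ε * Real.exp (C₀ * ‖y‖))))
      (c • fderiv ℝ (fun y : EuclideanSpace ℝ (Fin 3) => ‖y‖) x) x :=
    (hf ‖x‖).comp_hasFDerivAt x hnorm.hasFDerivAt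
  refine ⟨hG.differentiableAt, ?_⟩
  rw [hG.fderiv]
  -- bound on the operator norm
  have hnorm_le : ‖c • fderiv ℝ (fun y : EuclideanSpace ℝ (Fin 3) => ‖y‖) x‖ ≤ |c| := by
    rw [norm_smul, Real.norm_eq_abs]
    calc |c| * ‖fderiv ℝ (fun y : EuclideanSpace ℝ (Fin 3) => ‖y‖) x‖ ≤ |c| * 1 :=
          mul_le_mul_of_nonneg_left hNlip (abs_nonneg c)
      _ = |c| := mul_one _
  have hsq : ‖c • fderiv ℝ (fun y : EuclideanSpace ℝ (Fin 3) => ‖y‖) x‖ ^ 2 ≤ c ^ 2 := by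
    rw [← sq_abs c]
    exact pow_le_pow_left₀ (norm_nonneg _) hnorm_le 2
  refine hsq.trans ?_
  exact stmt11_scalar n C₀ ε Cn (deriv u ‖x‖) (u ‖x‖) ‖x‖ hC₀ hε (norm_nonneg x)
    hCn_nonneg (hCn_le ‖x‖)
    (fun hgt => hderiv_zero ‖x‖ (by rwa [abs_of_nonneg (norm_nonneg x)]))
    (by linarith [hu_le_one ‖x‖])
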